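/- arXiv:1505.01597 — 5 statements merged into one kernel-verified Lean document; each statement's English description precedes it below -/
import Mathlib

section
/- Let a > 0 and p ∈ (0,2). Define F_p := {(x,y) ∈ ℝ² : 0 ≤ x ≤ a and 0 ≤ y ≤ p√(a²−x²)/2}, B(h) := {z ∈ ℝ² : |z| ≤ a−h}, and c(p) := 2p√(2a)/(3√(4−p²)). Then there exist constants C > 0 and h₀ > 0 such that for all h ∈ (0,h₀), |λ²(F_p \ B(h)) − c(p) h^{3/2}| ≤ C h^{5/2}. -/
/-!
Put `w = a - x`. Above the abscissa `x` the set `F_p \ B(h)` is the vertical segment between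
`√((a - h)² - x²) = √(w - h) √(2a - h - w)` and `(p/2) √(a² - x²) = (p/2) √w √(2a - w)`, so its area
is `∫₀ᵃ capWidth`. Replacing the slowly varying factors `√(2a - w)` and `√(2a - h - w)` by `√(2a)`
gives the model `capWidthModel`, whose cap ends exactly at `w = u := h / (1 - p²/4)` and has area
`c(p) h^{3/2}`. The true cap ends before `w = 2u`, and on `[0, 2u]` the two widths differ by
`O(u^{3/2})`, which integrates to `O(h^{5/2})`.
-/


open MeasureTheory ProbabilityTheory Set Filter Topology

noncomputable section

/-- The plane with the Euclidean norm. -/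
abbrev Pt := EuclideanSpace ℝ (Fin 2)

/-- The point with coordinates `(x, y)`. -/
def pt (x y : ℝ) : Pt := WithLp.toLp 2 ![x, y]

lemma sqrt_sub_sqrt_le_div {u v : ℝ} (hu : 0 ≤ u) (huv : u ≤ v) (hv : 0 < v) :
    √v - √u ≤ (v - u) / √v := by
  rw [le_div_iff₀ (Real.sqrt_pos.2 hv)]
  nlinarith [Real.sq_sqrt hu, Real.sq_sqrt hv.le, Real.sqrt_nonneg u,
    Real.sqrt_le_sqrt huv, Real.sqrt_nonneg v]

lemma abs_sqrt_mul_sub_sqrt_mul_le (v : ℝ) {b d : ℝ} (hb : 0 < b) (hd : 0 ≤ d) (hdb : d ≤ b) :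
    |√(v * (b - d)) - √v * √b| ≤ d * √v / √b := by
  rcases le_or_gt 0 v with hv | hv
  · have hle : √(b - d) ≤ √b := Real.sqrt_le_sqrt (by linarith)
    rw [Real.sqrt_mul hv, ← mul_sub, abs_mul, abs_of_nonneg (Real.sqrt_nonneg v),
      abs_of_nonpos (by linarith), neg_sub, mul_comm d, mul_div_assoc]
    have := sqrt_sub_sqrt_le_div (by linarith : 0 ≤ b - d) (by linarith) hb
    rw [sub_sub_cancel] at this
    exact mul_le_mul_of_nonneg_left this (Real.sqrt_nonneg v)
  · rw [Real.sqrt_eq_zero'.2 hv.le, Real.sqrt_eq_zero'.2 (mul_nonpos_of_nonpos_of_nonneg hv.le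
      (by linarith))]
    simp

lemma integral_sqrt_of_nonpos_of_nonneg {s t : ℝ} (hs : s ≤ 0) (ht : 0 ≤ t) :
    ∫ x in s..t, √x = 2 / 3 * t * √t := by
  rw [← intervalIntegral.integral_add_adjacent_intervals (b := 0)
    (Real.continuous_sqrt.intervalIntegrable _ _) (Real.continuous_sqrt.intervalIntegrable _ _),
    intervalIntegral.integral_congr (g := fun _ => (0 : ℝ)) fun x hx => by
      rw [Set.uIcc_of_le hs] at hx; exact Real.sqrt_eq_zero'.2 hx.2]
  simp only [Real.sqrt_eq_rpow, intervalIntegral.integral_zero, zero_add]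
  rw [integral_rpow (Or.inl (by norm_num)), Real.zero_rpow (by norm_num),
    show (1 : ℝ) / 2 + 1 = 1 + 1 / 2 by norm_num, Real.rpow_add' ht (by norm_num), Real.rpow_one]
  ring

lemma abs_intervalIntegral_sub_le_of_eqOn {φ ψ : ℝ → ℝ} {a L K : ℝ}
    (hφ : IntervalIntegrable φ volume 0 a) (hψ : IntervalIntegrable ψ volume 0 a)
    (hL : 0 ≤ L) (hLa : L ≤ a) (hK : ∀ w ∈ Ioc 0 L, |φ w - ψ w| ≤ K)
    (heq : EqOn φ ψ (Icc L a)) :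
    |(∫ w in 0..a, φ w) - ∫ w in 0..a, ψ w| ≤ K * L := by
  have hφψ := hφ.sub hψ
  have hL_mem : L ∈ uIcc 0 a := by rw [uIcc_of_le (hL.trans hLa)]; exact ⟨hL, hLa⟩
  have htail : ∫ w in L..a, (φ w - ψ w) = 0 := by
    rw [intervalIntegral.integral_congr (g := fun _ => (0 : ℝ)) fun w hw => by
      rw [uIcc_of_le hLa] at hw; exact sub_eq_zero.2 (heq hw)]
    simp
  rw [← intervalIntegral.integral_sub hφ hψ,
    ← intervalIntegral.integral_add_adjacent_intervals (b := L)
      (hφψ.mono_set (uIcc_subset_uIcc_left hL_mem))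
      (hφψ.mono_set (uIcc_subset_uIcc_right hL_mem)), htail, add_zero, ← Real.norm_eq_abs]
  simpa [abs_of_nonneg hL] using intervalIntegral.norm_integral_le_of_norm_le_const
    (a := 0) (b := L) (C := K) (f := fun w => φ w - ψ w) fun w hw => by
      rw [uIoc_of_le hL] at hw; exact hK w hw

lemma half_mul_sqrt_eq {p : ℝ} (hp : 0 ≤ p) (w : ℝ) : p / 2 * √w = √(p ^ 2 / 4 * w) := by
  rw [Real.sqrt_mul (by positivity), show p ^ 2 / 4 = (p / 2) ^ 2 by ring,
    Real.sqrt_sq (by positivity)]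

lemma volume_slice_outside_closedBall (x r c : ℝ) :
    volume {y : ℝ | 0 ≤ y ∧ y ≤ c ∧ r ^ 2 < x ^ 2 + y ^ 2} =
      ENNReal.ofReal (max (c - √(r ^ 2 - x ^ 2)) 0) := by
  have hIoc : Ioc √(r ^ 2 - x ^ 2) c ⊆ {y : ℝ | 0 ≤ y ∧ y ≤ c ∧ r ^ 2 < x ^ 2 + y ^ 2} := by
    rintro y ⟨hy, hyc⟩
    have hy0 : 0 < y := (Real.sqrt_nonneg _).trans_lt hy
    refine ⟨hy0.le, hyc, ?_⟩
    rcases le_or_gt 0 (r ^ 2 - x ^ 2) with hrx | hrx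
    · nlinarith [(Real.sqrt_lt' hy0).1 hy]
    · nlinarith
  have hIcc : {y : ℝ | 0 ≤ y ∧ y ≤ c ∧ r ^ 2 < x ^ 2 + y ^ 2} ⊆ Icc √(r ^ 2 - x ^ 2) c := by
    rintro y ⟨hy0, hyc, hy⟩
    refine ⟨?_, hyc⟩
    calc √(r ^ 2 - x ^ 2) ≤ √(y ^ 2) := Real.sqrt_le_sqrt (by linarith)
      _ = y := Real.sqrt_sq hy0
  rw [ENNReal.ofReal_max, ENNReal.ofReal_zero, max_eq_left zero_le]
  apply le_antisymm
  · simpa using measure_mono (μ := volume) hIcc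
  · simpa using measure_mono (μ := volume) hIoc

lemma volume_preimage_coords (S : Set (ℝ × ℝ)) :
    volume ((fun z : Pt => (z 0, z 1)) ⁻¹' S) = volume S :=
  ((EuclideanSpace.volume_preserving_symm_measurableEquiv_toLp (Fin 2)).trans
    (volume_preserving_finTwoArrow ℝ)).measure_preimage_equiv S

lemma volume_subgraph_diff_closedBall {f : ℝ → ℝ} (hf : Continuous f) {a r : ℝ}
    (ha : 0 ≤ a) (hr : 0 ≤ r) :
    volume ({z : Pt | 0 ≤ z 0 ∧ z 0 ≤ a ∧ 0 ≤ z 1 ∧ z 1 ≤ f (z 0)} \ Metric.closedBall 0 r) =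
      ENNReal.ofReal (∫ x in 0..a, max (f x - √(r ^ 2 - x ^ 2)) 0) := by
  set S : Set (ℝ × ℝ) := {w | w.1 ∈ Icc 0 a ∧ 0 ≤ w.2 ∧ w.2 ≤ f w.1 ∧ r ^ 2 < w.1 ^ 2 + w.2 ^ 2}
  have hS : MeasurableSet S :=
    (measurableSet_Icc.preimage measurable_fst).inter <|
      (measurableSet_le measurable_const measurable_snd).inter <|
      (measurableSet_le measurable_snd (hf.measurable.comp measurable_fst)).inter <|
      measurableSet_lt measurable_const
        (by fun_prop : Measurable fun w : ℝ × ℝ => w.1 ^ 2 + w.2 ^ 2)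
  have hpre : {z : Pt | 0 ≤ z 0 ∧ z 0 ≤ a ∧ 0 ≤ z 1 ∧ z 1 ≤ f (z 0)} \ Metric.closedBall 0 r =
      (fun z : Pt => (z 0, z 1)) ⁻¹' S := by
    ext z
    have hnorm : ‖z‖ ^ 2 = z 0 ^ 2 + z 1 ^ 2 := by
      simp [EuclideanSpace.norm_sq_eq, Fin.sum_univ_two]
    simp only [Set.mem_sdiff, mem_ofPred_eq, Metric.mem_closedBall, dist_zero_right, mem_preimage,
      S, mem_Icc, ← hnorm, not_le, and_assoc, sq_lt_sq₀ hr (norm_nonneg z)]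
  have hslice : ∀ x, volume (Prod.mk x ⁻¹' S) =
      (Icc 0 a).indicator (fun x => ENNReal.ofReal (max (f x - √(r ^ 2 - x ^ 2)) 0)) x := by
    intro x
    by_cases hx : x ∈ Icc 0 a
    · simp only [indicator_of_mem hx, ← volume_slice_outside_closedBall, S, preimage_ofPred_eq,
        hx, true_and]
    · simp only [indicator_of_notMem hx, S, preimage_ofPred_eq, hx, false_and, ofPred_false,
        measure_empty]
  have hcont : Continuous fun x => max (f x - √(r ^ 2 - x ^ 2)) 0 := by fun_prop
  rw [hpre, volume_preimage_coords, Measure.volume_eq_prod, Measure.prod_apply hS,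
    lintegral_congr hslice, lintegral_indicator measurableSet_Icc,
    ← ofReal_integral_eq_lintegral_ofReal hcont.integrableOn_Icc
      (Eventually.of_forall fun _ => le_max_right _ _),
    intervalIntegral.integral_of_le ha, integral_Icc_eq_integral_Ioc]

def capLength (p h : ℝ) : ℝ := h / (1 - p ^ 2 / 4)

def capWidth (a p h w : ℝ) : ℝ :=
  max (p / 2 * √(w * (2 * a - w)) - √((w - h) * (2 * a - (w + h)))) 0

def capWidthModel (a p h w : ℝ) : ℝ :=
  max (p / 2 * (√w * √(2 * a)) - √(w - h) * √(2 * a)) 0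

section

variable {a p h w : ℝ}

lemma capLength_mul (hp0 : 0 ≤ p) (hp2 : p < 2) : capLength p h * (1 - p ^ 2 / 4) = h := by
  have : 0 < 1 - p ^ 2 / 4 := by nlinarith
  rw [capLength, div_mul_cancel₀ _ this.ne']

lemma continuous_capWidth : Continuous (capWidth a p h) := by
  unfold capWidth; fun_prop

lemma continuous_capWidthModel : Continuous (capWidthModel a p h) := by
  unfold capWidthModel; fun_prop

lemma capWidth_sub (x : ℝ) :
    capWidth a p h (a - x) = max (p * √(a ^ 2 - x ^ 2) / 2 - √((a - h) ^ 2 - x ^ 2)) 0 := by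
  unfold capWidth; ring_nf

lemma integral_capWidth :
    ∫ w in 0..a, capWidth a p h w =
      ∫ x in 0..a, max (p * √(a ^ 2 - x ^ 2) / 2 - √((a - h) ^ 2 - x ^ 2)) 0 := by
  simpa [capWidth_sub] using
    (intervalIntegral.integral_comp_sub_left (a := 0) (b := a) (capWidth a p h) a).symm

lemma capWidthModel_eq_zero (hp0 : 0 ≤ p) (hp2 : p < 2) (hw : capLength p h ≤ w) :
    capWidthModel a p h w = 0 := by
  have huq := capLength_mul (h := h) hp0 hp2
  have hq : 0 < 1 - p ^ 2 / 4 := by nlinarith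
  refine max_eq_right (sub_nonpos.2 ?_)
  rw [← mul_assoc, half_mul_sqrt_eq hp0]
  gcongr
  nlinarith

lemma capWidthModel_eq_of_le (hp0 : 0 ≤ p) (hp2 : p < 2) (hw : w ≤ capLength p h) :
    capWidthModel a p h w = p / 2 * √(2 * a) * √w - √(2 * a) * √(w - h) := by
  have huq := capLength_mul (h := h) hp0 hp2
  have hq : 0 < 1 - p ^ 2 / 4 := by nlinarith
  have hle : √(w - h) ≤ p / 2 * √w := by
    rw [half_mul_sqrt_eq hp0]
    gcongr
    nlinarith
  rw [capWidthModel, max_eq_left (sub_nonneg.2 (by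
    rw [← mul_assoc]; exact mul_le_mul_of_nonneg_right hle (Real.sqrt_nonneg _)))]
  ring

lemma integral_capWidthModel (hp0 : 0 ≤ p) (hp2 : p < 2) (hh : 0 ≤ h)
    (ha : capLength p h ≤ a) :
    ∫ w in 0..a, capWidthModel a p h w =
      2 * p * √(2 * a) / (3 * √(4 - p ^ 2)) * h ^ ((3 : ℝ) / 2) := by
  set u := capLength p h
  set q := 1 - p ^ 2 / 4
  have huq : u * q = h := capLength_mul hp0 hp2
  have hq : 0 < q := by simp only [q]; nlinarith
  have hq1 : q ≤ 1 := by simp only [q]; nlinarith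
  have hu : 0 ≤ u := div_nonneg hh hq.le
  have hhu : h ≤ u := by nlinarith [mul_le_mul_of_nonneg_left hq1 hu]
  have hint : ∀ s t : ℝ, IntervalIntegrable (capWidthModel a p h) volume s t :=
    fun _ _ => continuous_capWidthModel.intervalIntegrable _ _
  have htail : ∫ w in u..a, capWidthModel a p h w = 0 := by
    rw [intervalIntegral.integral_congr (g := fun _ => (0 : ℝ)) fun w hw => by
      rw [uIcc_of_le ha] at hw; exact capWidthModel_eq_zero hp0 hp2 hw.1]
    simp
  have hhead : ∫ w in 0..u, capWidthModel a p h w =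
      p / 2 * √(2 * a) * (2 / 3 * u * √u) - √(2 * a) * (2 / 3 * (u - h) * √(u - h)) := by
    rw [intervalIntegral.integral_congr
        (g := fun w => p / 2 * √(2 * a) * √w - √(2 * a) * √(w - h)) fun w hw => by
          rw [uIcc_of_le hu] at hw; exact capWidthModel_eq_of_le hp0 hp2 hw.2,
      intervalIntegral.integral_sub ((by fun_prop : Continuous _).intervalIntegrable _ _)
        ((by fun_prop : Continuous fun w => √(2 * a) * √(w - h)).intervalIntegrable _ _),
      intervalIntegral.integral_const_mul, intervalIntegral.integral_const_mul,
      intervalIntegral.integral_comp_sub_right (fun x => √x),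
      integral_sqrt_of_nonpos_of_nonneg le_rfl hu,
      integral_sqrt_of_nonpos_of_nonneg (by linarith) (by linarith)]
  have hsqrt_uh : √(u - h) = p / 2 * √u := by
    rw [half_mul_sqrt_eq hp0, ← huq]; simp only [q]; ring_nf
  have hcube : h ^ ((3 : ℝ) / 2) = u * q * (√u * √q) := by
    rw [Real.rpow_div_two_eq_sqrt _ hh, show (3 : ℝ) = (3 : ℕ) by norm_num, Real.rpow_natCast,
      pow_succ, Real.sq_sqrt hh, ← huq, Real.sqrt_mul hu]
  have hsqrt_4 : √(4 - p ^ 2) = 2 * √q := by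
    rw [show 4 - p ^ 2 = 2 ^ 2 * q by ring, Real.sqrt_mul (by norm_num),
      Real.sqrt_sq (by norm_num)]
  rw [← intervalIntegral.integral_add_adjacent_intervals (hint 0 u) (hint u a), htail, add_zero,
    hhead, hsqrt_uh, hsqrt_4, hcube, ← huq]
  field_simp
  simp only [q]
  ring

lemma capWidth_eq_zero (hp0 : 0 ≤ p) (hp2 : p < 2) (hh : 0 ≤ h)
    (hw : 2 * capLength p h ≤ w) (hwa : w ≤ a) : capWidth a p h w = 0 := by
  set u := capLength p h
  have huq : u * (1 - p ^ 2 / 4) = h := capLength_mul hp0 hp2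
  have hq : 0 < 1 - p ^ 2 / 4 := by nlinarith
  have hu : 0 ≤ u := div_nonneg hh hq.le
  have hw_mul : 2 * u * a ≤ w * (2 * a - w) := by nlinarith
  refine max_eq_right (sub_nonpos.2 ?_)
  rw [half_mul_sqrt_eq hp0]
  apply Real.sqrt_le_sqrt
  nlinarith [mul_le_mul_of_nonneg_left hw_mul hq.le]

lemma abs_capWidth_sub_capWidthModel_le (hp0 : 0 ≤ p) (hp2 : p ≤ 2) (ha : 0 < a) (hh : 0 ≤ h)
    (hw : 0 ≤ w) (hwh : w + h ≤ 2 * a) :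
    |capWidth a p h w - capWidthModel a p h w| ≤ (2 * w + h) * √w / √(2 * a) := by
  have h2a : 0 < 2 * a := by linarith
  have hupper := abs_sqrt_mul_sub_sqrt_mul_le w h2a hw (by linarith)
  have hlower := abs_sqrt_mul_sub_sqrt_mul_le (w - h) h2a (by linarith) hwh
  calc |capWidth a p h w - capWidthModel a p h w|
      ≤ |p / 2 * (√(w * (2 * a - w)) - √w * √(2 * a))
          - (√((w - h) * (2 * a - (w + h))) - √(w - h) * √(2 * a))| := by
        refine (abs_max_sub_max_le_abs _ _ _).trans_eq ?_
        ring_nf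
    _ ≤ p / 2 * |√(w * (2 * a - w)) - √w * √(2 * a)|
          + |√((w - h) * (2 * a - (w + h))) - √(w - h) * √(2 * a)| := by
        refine (abs_sub _ _).trans_eq ?_
        rw [abs_mul, abs_of_nonneg (by positivity : 0 ≤ p / 2)]
    _ ≤ 1 * (w * √w / √(2 * a)) + (w + h) * √w / √(2 * a) := by
        gcongr
        · linarith
        · exact hlower.trans (by gcongr; linarith)
    _ = (2 * w + h) * √w / √(2 * a) := by ring

lemma abs_integral_capWidth_sub_capWidthModel_le (ha : 0 < a) (hp0 : 0 ≤ p)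
    (hp2 : p < 2) (hh : 0 ≤ h) (hu : 2 * capLength p h ≤ a) :
    |(∫ w in 0..a, capWidth a p h w) - ∫ w in 0..a, capWidthModel a p h w| ≤
      10 * capLength p h ^ 2 * √(capLength p h) / √a := by
  set u := capLength p h
  have huq : u * (1 - p ^ 2 / 4) = h := capLength_mul hp0 hp2
  have hq : 0 < 1 - p ^ 2 / 4 := by nlinarith
  have hu0 : 0 ≤ u := div_nonneg hh hq.le
  have hhu : h ≤ u := by nlinarith
  have hK : ∀ w ∈ Ioc 0 (2 * u),
      |capWidth a p h w - capWidthModel a p h w| ≤ 5 * u * √u / √a := by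
    rintro w ⟨hw0, hwu⟩
    calc |capWidth a p h w - capWidthModel a p h w| ≤ (2 * w + h) * √w / √(2 * a) :=
          abs_capWidth_sub_capWidthModel_le hp0 hp2.le ha hh hw0.le (by linarith)
      _ ≤ 5 * u * √(2 * u) / √(2 * a) := by gcongr; linarith
      _ = 5 * u * √u / √a := by
          rw [Real.sqrt_mul zero_le_two, Real.sqrt_mul zero_le_two]
          field_simp
  refine (abs_intervalIntegral_sub_le_of_eqOn (continuous_capWidth.intervalIntegrable _ _)
    (continuous_capWidthModel.intervalIntegrable _ _) (by positivity) hu hK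
    fun w hw => ?_).trans_eq (by ring)
  rw [capWidth_eq_zero hp0 hp2 hh hw.1 hw.2, capWidthModel_eq_zero hp0 hp2 (by linarith [hw.1])]

end

/-- The area of the cap cut from the region `F_p` below the scaled ellipse boundary by the
disk of radius `a - h` is `c(p) h^{3/2} + O(h^{5/2})` as `h → 0⁺`. -/
theorem statement6 (a p : ℝ) (ha : 0 < a) (hp : p ∈ Set.Ioo (0 : ℝ) 2) :
    ∃ C > (0 : ℝ), ∃ h₀ > (0 : ℝ), ∀ h ∈ Set.Ioo 0 h₀,
      |(volume ({z : Pt | 0 ≤ z 0 ∧ z 0 ≤ a ∧ 0 ≤ z 1 ∧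
            z 1 ≤ p * Real.sqrt (a ^ 2 - z 0 ^ 2) / 2} \
          Metric.closedBall 0 (a - h))).toReal -
        2 * p * Real.sqrt (2 * a) / (3 * Real.sqrt (4 - p ^ 2)) * h ^ ((3 : ℝ) / 2)| ≤
      C * h ^ ((5 : ℝ) / 2) := by
  obtain ⟨hp0, hp2⟩ := hp
  set q := 1 - p ^ 2 / 4
  have hq : 0 < q := by simp only [q]; nlinarith
  have hq1 : q ≤ 1 := by simp only [q]; nlinarith
  refine ⟨10 / (q ^ 2 * √q * √a), by positivity, q * a / 2, by positivity, ?_⟩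
  rintro h ⟨hh0, hha⟩
  have hcap : capLength p h = h / q := rfl
  have hu : 2 * capLength p h ≤ a := by
    rw [hcap, ← mul_div_assoc, div_le_iff₀ hq]; linarith
  have hpow : h ^ ((5 : ℝ) / 2) = h ^ 2 * √h := by
    rw [Real.rpow_div_two_eq_sqrt _ hh0.le, show (5 : ℝ) = (4 + 1 : ℕ) by norm_num,
      Real.rpow_natCast, pow_succ, show 4 = 2 * 2 by rfl, pow_mul, Real.sq_sqrt hh0.le]
  have hbound : 10 * capLength p h ^ 2 * √(capLength p h) / √a =
      10 / (q ^ 2 * √q * √a) * h ^ ((5 : ℝ) / 2) := by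
    rw [hcap, Real.sqrt_div hh0.le, hpow]
    field_simp
  rw [volume_subgraph_diff_closedBall (f := fun x => p * √(a ^ 2 - x ^ 2) / 2) (by fun_prop)
      ha.le (by nlinarith), ENNReal.toReal_ofReal (intervalIntegral.integral_nonneg ha.le
        fun _ _ => le_max_right _ _), ← integral_capWidth,
    ← integral_capWidthModel hp0.le hp2 hh0.le (by linarith [div_nonneg hh0.le hq.le]), ← hbound]
  exact abs_integral_capWidth_sub_capWidthModel_le ha hp0.le hp2 hh0.le hu

end
end

section
/- Under assumptions A1–A6, for each i ∈ {1,2,3,4} and all sufficiently small h > 0 define γ_i(h) := arctan(√((a−h)² − x̄_i(h)²)/|x̄_i(h)|), the acute angle between the horizontal axis and the ray from the origin through the unique intersection point of the graph of g_i with ∂B(h). Then γ_i(h)/(τ_i h^{1/2}) → 1 as h → 0⁺, where τ_i := q_i √(2a)/(a √(4 − q_i²)). -/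
open MeasureTheory ProbabilityTheory Set Filter Topology

noncomputable section

/-- The `i`-th open quadrant (`0`-based; `quadrant 0` is the first quadrant, numbering
anti-clockwise). -/
def quadrant : Fin 4 → Set Pt
  | 0 => {z | 0 < z 0 ∧ 0 < z 1}
  | 1 => {z | z 0 < 0 ∧ 0 < z 1}
  | 2 => {z | z 0 < 0 ∧ z 1 < 0}
  | 3 => {z | 0 < z 0 ∧ z 1 < 0}

/-- The domain of the boundary function of the `i`-th quadrant. -/
def bdom (a ν : ℝ) : Fin 4 → Set ℝ
  | 0 => Icc ν a
  | 1 => Icc (-a) (-ν)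
  | 2 => Icc (-a) (-ν)
  | 3 => Icc ν a

/-- The 'upper boundary function' `f_a` of an ellipse with major axis `2a` and minor axis `a`. -/
def fa (a x : ℝ) : ℝ := Real.sqrt (a ^ 2 - x ^ 2) / 2

/-- Assumptions A1–A6 on the compact set `E ⊆ ℝ²`.  Quadrants and boundary functions are
indexed `0`-based by `Fin 4`, so index `i` corresponds to quadrant `i+1` of the paper. -/
structure DomainAssumptions where
  E : Set Pt
  a : ℝ
  ν : ℝ
  g : Fin 4 → ℝ → ℝ
  q : Fin 4 → ℝ
  xbar : ℝ → Fin 4 → ℝ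
  h₀ : ℝ
  ha : 0 < a
  hE : IsCompact E
  hν : ν ∈ Ico 0 a
  -- A1
  a1_diam : Metric.diam E = 2 * a
  a1_inf : IsGLB ((fun z : Pt => z 0) '' E) (-a)
  a1_sup : IsLUB ((fun z : Pt => z 0) '' E) a
  -- A2
  a2 : ∀ ε > 0, Metric.diam (E \ (Metric.ball (pt (-a) 0) ε ∪ Metric.ball (pt a 0) ε)) < 2 * a
  -- A3
  a3_right : ∀ ε > 0, ∀ i ∈ ({0, 3} : Set (Fin 4)),
      0 < volume (E ∩ quadrant i ∩ Metric.ball (pt a 0) ε)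
  a3_left : ∀ ε > 0, ∀ i ∈ ({1, 2} : Set (Fin 4)),
      0 < volume (E ∩ quadrant i ∩ Metric.ball (pt (-a) 0) ε)
  -- A4
  a4_cont : ∀ i, ContinuousOn (g i) (bdom a ν i)
  a4_upper : ∀ i ∈ ({0, 1} : Set (Fin 4)), ∀ x ∈ bdom a ν i, 0 ≤ g i x
  a4_lower : ∀ i ∈ ({2, 3} : Set (Fin 4)), ∀ x ∈ bdom a ν i, g i x ≤ 0
  a4_zero_right : g 0 a = 0 ∧ g 3 a = 0
  a4_zero_left : g 1 (-a) = 0 ∧ g 2 (-a) = 0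
  a4_right : interior E ∩ {z : Pt | ν < z 0} =
      {z : Pt | ν < z 0 ∧ z 0 < a ∧ g 3 (z 0) < z 1 ∧ z 1 < g 0 (z 0)}
  a4_left : interior E ∩ {z : Pt | z 0 < -ν} =
      {z : Pt | -a < z 0 ∧ z 0 < -ν ∧ g 2 (z 0) < z 1 ∧ z 1 < g 1 (z 0)}
  -- A5
  hq : ∀ i, q i ∈ Ioo (0 : ℝ) 2
  a5_0 : Tendsto (fun x => g 0 x / fa a x) (𝓝[<] a) (𝓝 (q 0))
  a5_3 : Tendsto (fun x => -g 3 x / fa a x) (𝓝[<] a) (𝓝 (q 3))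
  a5_1 : Tendsto (fun x => g 1 x / fa a x) (𝓝[>] (-a)) (𝓝 (q 1))
  a5_2 : Tendsto (fun x => -g 2 x / fa a x) (𝓝[>] (-a)) (𝓝 (q 2))
  -- A6
  hh₀ : 0 < h₀
  a6_inside : ∀ h ∈ Ioo 0 h₀, ∀ i,
      interior (E ∩ quadrant i) ∩ {z : Pt | |z 0| < ν} ⊆ Metric.closedBall 0 (a - h)
  a6_unique : ∀ h ∈ Ioo 0 h₀, ∀ i,
      {x | x ∈ bdom a ν i ∧ x ^ 2 + g i x ^ 2 = (a - h) ^ 2} = {xbar h i}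

namespace DomainAssumptions

variable (A : DomainAssumptions)

/-- The constant `c_i`. -/
def cConst (i : Fin 4) : ℝ := 2 * A.q i * Real.sqrt (2 * A.a) / (3 * Real.sqrt (4 - A.q i ^ 2))

/-- The constant `τ_i`. -/
def tauConst (i : Fin 4) : ℝ := 3 / (2 * A.a) * A.cConst i

/-- The end cap `A_i(h) = E_i \ B(h)`. -/
def cap (i : Fin 4) (h : ℝ) : Set Pt := (A.E ∩ quadrant i) \ Metric.closedBall 0 (A.a - h)

end DomainAssumptions

/-- Assumptions A1–A7: the domain assumptions together with a density `f` supported by `E`,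
continuous and positive at the poles. -/
structure ModelAssumptions extends DomainAssumptions where
  f : Pt → ℝ
  ε₀ : ℝ
  hf_nonneg : ∀ z, 0 ≤ f z
  hf_meas : Measurable f
  hf_prob : ∫⁻ z, ENNReal.ofReal (f z) = 1
  hf_supp : ∀ z, z ∉ E → f z = 0
  hε₀ : 0 < ε₀
  hf_cont_right : ∀ ε ∈ Ioo 0 ε₀, ContinuousOn f (E ∩ Metric.ball (pt a 0) ε)
  hf_cont_left : ∀ ε ∈ Ioo 0 ε₀, ContinuousOn f (E ∩ Metric.ball (pt (-a) 0) ε)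
  hp_right : 0 < f (pt a 0)
  hp_left : 0 < f (pt (-a) 0)

namespace ModelAssumptions

variable (A : ModelAssumptions)

/-- The density value `p_i` at the pole of the `i`-th quadrant. -/
def p : Fin 4 → ℝ
  | 0 => A.f (pt A.a 0)
  | 1 => A.f (pt (-A.a) 0)
  | 2 => A.f (pt (-A.a) 0)
  | 3 => A.f (pt A.a 0)

/-- The constant `σ_i = (p_i c_i)^{-2/3}`. -/
def sigConst (i : Fin 4) : ℝ := (A.p i * A.cConst i) ^ (-(2 / 3) : ℝ)

/-- The law of a single sample point: the measure with density `f` w.r.t. Lebesgue measure. -/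
def law : Measure Pt := volume.withDensity fun z => ENNReal.ofReal (A.f z)

end ModelAssumptions

/-- The unit-exponential distribution on `ℝ`. -/
def expLaw : Measure ℝ :=
  volume.withDensity fun y => ENNReal.ofReal (if 0 ≤ y then Real.exp (-y) else 0)

/-- The uniform distribution on `[0,1]`. -/
def uniformLaw : Measure ℝ := volume.restrict (Icc 0 1)

/-- Auxiliary data for the limit distribution: four independent families
`Y^i_m` (i.i.d. unit-exponential) and `U^i_m` (i.i.d. uniform on `[0,1]`),
all jointly independent. -/
structure NAData (Ω' : Type*) [MeasurableSpace Ω'] (P' : Measure Ω') where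
  Y : Fin 4 → ℕ → Ω' → ℝ
  U : Fin 4 → ℕ → Ω' → ℝ
  Ymeas : ∀ i m, Measurable (Y i m)
  Umeas : ∀ i m, Measurable (U i m)
  indep : iIndepFun
      (Sum.elim (fun p : Fin 4 × ℕ => Y p.1 p.2) (fun p : Fin 4 × ℕ => U p.1 p.2)) P'
  Ylaw : ∀ i m, P'.map (Y i m) = expLaw
  Ulaw : ∀ i m, P'.map (U i m) = uniformLaw

namespace NAData

variable {Ω' : Type*} [MeasurableSpace Ω'] {P' : Measure Ω'} (D : NAData Ω' P')

/-- `S^i_m = Y^i_1 + … + Y^i_{m+1}` (`0`-based, so `S i 0` is the paper's `S_1`). -/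
def S (i : Fin 4) (m : ℕ) (ω : Ω') : ℝ := ∑ j ∈ Finset.range (m + 1), D.Y i j ω

/-- `Z^i_{1,m} = σ_i S_m^{2/3}`. -/
def Z1 (sig : Fin 4 → ℝ) (i : Fin 4) (m : ℕ) (ω : Ω') : ℝ := sig i * D.S i m ω ^ ((2 : ℝ) / 3)

/-- `Z^i_{2,m} = U_m τ_i σ_i^{1/2} S_m^{1/3}`. -/
def Z2 (sig tau : Fin 4 → ℝ) (i : Fin 4) (m : ℕ) (ω : Ω') : ℝ :=
  D.U i m ω * tau i * Real.sqrt (sig i) * D.S i m ω ^ ((1 : ℝ) / 3)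

/-- `S^{i,j}` for opposite quadrants (`(1,3)` and `(2,4)` in the paper's numbering). -/
def Sopp (a : ℝ) (sig tau : Fin 4 → ℝ) (i j : Fin 4) (ω : Ω') : ℝ :=
  ⨅ kl : ℕ × ℕ, (D.Z1 sig i kl.1 ω + D.Z1 sig j kl.2 ω +
    a / 4 * (D.Z2 sig tau i kl.1 ω - D.Z2 sig tau j kl.2 ω) ^ 2)

/-- `S^{i,j}` for adjacent quadrants (`(1,2)` and `(3,4)` in the paper's numbering). -/
def Sadj (a : ℝ) (sig tau : Fin 4 → ℝ) (i j : Fin 4) (ω : Ω') : ℝ :=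
  ⨅ kl : ℕ × ℕ, (D.Z1 sig i kl.1 ω + D.Z1 sig j kl.2 ω +
    a / 4 * (D.Z2 sig tau i kl.1 ω + D.Z2 sig tau j kl.2 ω) ^ 2)

/-- The limit random variable `min {S^{1,2}, S^{1,3}, S^{2,4}, S^{3,4}}`. -/
def L (a : ℝ) (sig tau : Fin 4 → ℝ) (ω : Ω') : ℝ :=
  min (min (D.Sadj a sig tau 0 1 ω) (D.Sopp a sig tau 0 2 ω))
    (min (D.Sopp a sig tau 1 3 ω) (D.Sadj a sig tau 2 3 ω))

end NAData

/-- Convergence in distribution (along `atTop` on `ℕ`) of `α`-valued random variables `X n`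
(defined on `(Ω, P)`) to the law of `L` (defined on `(Ω', P')`), expressed by convergence of
integrals of bounded continuous functions. -/
def ConvInDist {α : Type*} [TopologicalSpace α] {Ω : Type*} [MeasurableSpace Ω] (P : Measure Ω)
    {Ω' : Type*} [MeasurableSpace Ω'] (P' : Measure Ω') (X : ℕ → Ω → α) (L : Ω' → α) : Prop :=
  ∀ g : BoundedContinuousFunction α ℝ,
    Tendsto (fun n => ∫ ω, g (X n ω) ∂P) atTop (𝓝 (∫ ω', g (L ω') ∂P'))


/-! The intersection point `(x, y)`, `y = |g_i(x)|`, lies on the circle of radius `a - h`,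
so `a² - x² = h (2a - h) + y²`; with `ρ = y / f_a(x)` this gives
`y² / h = ρ² (2a - h) / (4 - ρ²)`. By the intermediate value theorem and uniqueness of the
intersection, `x → a`, hence `ρ → q_i` by A5 and `y / √h → q_i √(2a) / √(4 - q_i²)`.
As `arctan t ~ t`, the angle `arctan (y / |x|)` is asymptotic to `τ_i √h`. The left quadrants
reduce to the right ones by `x ↦ -x`, the lower ones to the upper ones by `g ↦ -g`. -/

open Real

lemma tendsto_arctan_div_self : Tendsto (fun u => arctan u / u) (𝓝[≠] 0) (𝓝 1) := by
  have h := hasDerivAt_iff_tendsto_slope.mp (hasDerivAt_arctan 0)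
  norm_num at h
  refine h.congr fun u => ?_
  simp [slope_def_field]

lemma tendsto_arctan_div_mul_of_tendsto_div {α : Type*} {l : Filter α} {T s : α → ℝ} {τ : ℝ}
    (hτ : τ ≠ 0) (hs : Tendsto s l (𝓝 0)) (hT : Tendsto (fun t => T t / s t) l (𝓝 τ)) :
    Tendsto (fun t => arctan (T t) / (τ * s t)) l (𝓝 1) := by
  have hne : ∀ᶠ t in l, T t ≠ 0 ∧ s t ≠ 0 := by
    filter_upwards [hT.eventually_ne hτ] with t ht using div_ne_zero_iff.1 ht
  have hT0 : Tendsto T l (𝓝 0) := by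
    refine (mul_zero τ ▸ hT.mul hs).congr' ?_
    filter_upwards [hne] with t ht using div_mul_cancel₀ _ ht.2
  have hlim := (tendsto_arctan_div_self.comp
    (tendsto_nhdsWithin_iff.2 ⟨hT0, hne.mono fun _ ht => ht.1⟩)).mul (hT.div_const τ)
  rw [div_self hτ, mul_one] at hlim
  refine hlim.congr' ?_
  filter_upwards [hne] with t ⟨hTt, hst⟩
  simp only [Function.comp_apply]
  field_simp

lemma tendsto_nhdsLT_of_unique_root {α : Type*} {l : Filter α} {φ : ℝ → ℝ} {ℓ X : α → ℝ}
    {ν b c : ℝ} (hνb : ν < b) (hφ : ContinuousOn φ (Icc ν b)) (hlt : ∃ᶠ x in 𝓝[<] b, φ x < c)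
    (hb : c ≤ φ b) (hℓ : Tendsto ℓ l (𝓝[<] c))
    (huniq : ∀ᶠ t in l, ∀ x ∈ Icc ν b, φ x = ℓ t → x = X t) :
    Tendsto X l (𝓝[<] b) := by
  refine (nhdsLT_basis b).tendsto_right_iff.2 fun y hy => ?_
  obtain ⟨x₁, hx₁c, hx₁⟩ := (hlt.and_eventually (Ioo_mem_nhdsLT (max_lt hy hνb))).exists
  filter_upwards [huniq, hℓ (Ioo_mem_nhdsLT hx₁c)] with t hu hℓt
  obtain ⟨x, hx, hφx⟩ := intermediate_value_Icc hx₁.2.le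
    (hφ.mono (Icc_subset_Icc (le_max_right y ν |>.trans hx₁.1.le) le_rfl))
    ⟨hℓt.1.le, (hℓt.2.trans_le hb).le⟩
  have hxb : x ≠ b := by
    rintro rfl
    linarith [hℓt.2]
  rw [← hu x ⟨(le_max_right y ν).trans (hx₁.1.le.trans hx.1), hx.2⟩ hφx]
  exact ⟨(le_max_left y ν).trans_lt (hx₁.1.trans_le hx.1), lt_of_le_of_ne hx.2 hxb⟩

lemma tendsto_sub_sq_nhdsLT {a : ℝ} (ha : 0 < a) :
    Tendsto (fun h => (a - h) ^ 2) (𝓝[>] 0) (𝓝[<] (a ^ 2)) := by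
  refine tendsto_nhdsWithin_iff.2 ⟨?_, ?_⟩
  · exact ((continuous_const.sub continuous_id).pow 2).tendsto' 0 _ (by simp)
      |>.mono_left nhdsWithin_le_nhds
  · filter_upwards [Ioo_mem_nhdsGT (by linarith : (0 : ℝ) < a)] with h hh
    exact (sq_lt_sq₀ (by linarith [hh.2]) ha.le).2 (by linarith [hh.1])

lemma sq_div_eq_of_sq_add_sq {a h x y ρ : ℝ} (hh : h ≠ 0) (hρ : ρ ^ 2 ≠ 4)
    (hxy : x ^ 2 + y ^ 2 = (a - h) ^ 2) (hy : y ^ 2 = ρ ^ 2 * (a ^ 2 - x ^ 2) / 4) :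
    y ^ 2 / h = ρ ^ 2 * (2 * a - h) / (4 - ρ ^ 2) := by
  rw [div_eq_div_iff hh (sub_ne_zero.2 hρ.symm)]
  linear_combination 4 * hy - ρ ^ 2 * hxy

lemma fa_pos {a x : ℝ} (hx : x ^ 2 < a ^ 2) : 0 < fa a x :=
  div_pos (sqrt_pos.2 (sub_pos.2 hx)) two_pos

lemma fa_sq {a x : ℝ} (hx : x ^ 2 ≤ a ^ 2) : fa a x ^ 2 = (a ^ 2 - x ^ 2) / 4 := by
  rw [fa, div_pow, sq_sqrt (sub_nonneg.2 hx)]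
  norm_num

lemma fa_neg (a x : ℝ) : fa a (-x) = fa a x := by
  rw [fa, fa, neg_sq]

lemma eventually_sq_add_sq_lt {a q : ℝ} {G : ℝ → ℝ} (ha : 0 < a) (hq : |q| < 2)
    (hlim : Tendsto (fun x => G x / fa a x) (𝓝[<] a) (𝓝 q)) :
    ∀ᶠ x in 𝓝[<] a, x ^ 2 + G x ^ 2 < a ^ 2 := by
  filter_upwards [hlim (Ioo_mem_nhds (neg_lt_of_abs_lt hq) (lt_of_abs_lt hq)),
    Ioo_mem_nhdsLT (neg_lt_self ha)] with x hρ hx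
  have hx2 : x ^ 2 < a ^ 2 := sq_lt_sq' hx.1 hx.2
  have hfa := fa_pos hx2
  have hρ2 : (G x / fa a x) ^ 2 < 4 := by nlinarith [hρ.1, hρ.2]
  calc x ^ 2 + G x ^ 2 = x ^ 2 + (G x / fa a x) ^ 2 * fa a x ^ 2 := by
        rw [div_pow, div_mul_cancel₀ _ (pow_ne_zero 2 hfa.ne')]
    _ < x ^ 2 + 4 * fa a x ^ 2 := by gcongr
    _ = a ^ 2 := by rw [fa_sq hx2.le]; ring

lemma tendsto_nhdsLT_of_unique_sq_add_sq_eq {a ν q : ℝ} (ha : 0 < a) (hνa : ν < a)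
    (hq : |q| < 2) {G X : ℝ → ℝ} (hG : ContinuousOn G (Icc ν a))
    (hlim : Tendsto (fun x => G x / fa a x) (𝓝[<] a) (𝓝 q))
    (hX : ∀ᶠ h in 𝓝[>] 0, {x | x ∈ Icc ν a ∧ x ^ 2 + G x ^ 2 = (a - h) ^ 2} = {X h}) :
    Tendsto X (𝓝[>] 0) (𝓝[<] a) := by
  refine tendsto_nhdsLT_of_unique_root (φ := fun x => x ^ 2 + G x ^ 2) hνa
    ((continuousOn_id.pow 2).add (hG.pow 2))
    (eventually_sq_add_sq_lt ha hq hlim).frequently (by nlinarith [sq_nonneg (G a)])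
    (tendsto_sub_sq_nhdsLT ha) ?_
  filter_upwards [hX] with h hS x hx hφx
  exact (hS.subset ⟨hx, hφx⟩ : x ∈ {X h})

lemma tendsto_sqrt_sub_sq_div_sqrt {a q : ℝ} (hq0 : 0 ≤ q) (hq2 : q < 2) {X y : ℝ → ℝ}
    (hρ : Tendsto (fun h => y h / fa a (X h)) (𝓝[>] 0) (𝓝 q))
    (hX : ∀ᶠ h in 𝓝[>] 0, X h ^ 2 < a ^ 2)
    (hXy : ∀ᶠ h in 𝓝[>] 0, X h ^ 2 + y h ^ 2 = (a - h) ^ 2) :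
    Tendsto (fun h => √((a - h) ^ 2 - X h ^ 2) / √h) (𝓝[>] 0)
      (𝓝 (q * √(2 * a) / √(4 - q ^ 2))) := by
  have hq4 : 0 < 4 - q ^ 2 := by nlinarith
  have hsq : Tendsto (fun h => y h ^ 2 / h) (𝓝[>] 0)
      (𝓝 (q ^ 2 * (2 * a - 0) / (4 - q ^ 2))) := by
    refine (((hρ.pow 2).mul (tendsto_const_nhds.sub (tendsto_id'.2 nhdsWithin_le_nhds))).div
      (tendsto_const_nhds.sub (hρ.pow 2)) hq4.ne').congr' ?_
    filter_upwards [self_mem_nhdsWithin, hX, hXy, hρ (Iio_mem_nhds hq2),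
      hρ (Ioi_mem_nhds (by linarith : -2 < q))] with h hh hXh hXyh hρ2 hρ2'
    refine (sq_div_eq_of_sq_add_sq (ne_of_gt hh) ?_ hXyh ?_).symm
    · nlinarith [show y h / fa a (X h) < 2 from hρ2, show -2 < y h / fa a (X h) from hρ2']
    · rw [mul_div_assoc, ← fa_sq hXh.le, ← mul_pow, div_mul_cancel₀ _ (fa_pos hXh).ne']
  have hlim := (continuous_sqrt.tendsto _).comp hsq
  rw [sub_zero, sqrt_div' _ hq4.le, sqrt_mul (sq_nonneg q), sqrt_sq hq0] at hlim
  refine hlim.congr' ?_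
  filter_upwards [self_mem_nhdsWithin, hXy] with h hh hXyh
  rw [Function.comp_apply, sqrt_div' _ (le_of_lt hh), sqrt_sq_eq_abs, ← hXyh,
    add_sub_cancel_left, sqrt_sq_eq_abs]

theorem tendsto_arctan_div_sqrt_of_tendsto_div_fa {a ν q : ℝ} (ha : 0 < a) (hνa : ν < a)
    (hq : q ∈ Ioo 0 2) {G X : ℝ → ℝ} (hG : ContinuousOn G (Icc ν a))
    (hlim : Tendsto (fun x => G x / fa a x) (𝓝[<] a) (𝓝 q))
    (hX : ∀ᶠ h in 𝓝[>] 0, {x | x ∈ Icc ν a ∧ x ^ 2 + G x ^ 2 = (a - h) ^ 2} = {X h}) :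
    Tendsto (fun h => arctan (√((a - h) ^ 2 - X h ^ 2) / |X h|) /
        (q * √(2 * a) / (a * √(4 - q ^ 2)) * h ^ ((1 : ℝ) / 2))) (𝓝[>] 0) (𝓝 1) := by
  have hXa := tendsto_nhdsLT_of_unique_sq_add_sq_eq ha hνa
    (abs_lt.2 ⟨by linarith [hq.1], hq.2⟩) hG hlim hX
  have hY := tendsto_sqrt_sub_sq_div_sqrt hq.1.le hq.2 (hlim.comp hXa)
    (hXa.eventually (Ioo_mem_nhdsLT (neg_lt_self ha)) |>.mono fun _ hx => sq_lt_sq' hx.1 hx.2)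
    (hX.mono fun h hS => (hS.symm.subset rfl : X h ∈ _).2)
  have hT : Tendsto (fun h => √((a - h) ^ 2 - X h ^ 2) / |X h| / √h) (𝓝[>] 0)
      (𝓝 (q * √(2 * a) / (a * √(4 - q ^ 2)))) := by
    have hXabs := (hXa.mono_right nhdsWithin_le_nhds).abs
    rw [abs_of_pos ha] at hXabs
    rw [mul_comm a, ← div_div]
    exact (hY.div hXabs ha.ne').congr fun h => div_right_comm _ _ _
  have hτ : q * √(2 * a) / (a * √(4 - q ^ 2)) ≠ 0 := by
    have := sqrt_pos.2 (by linarith : 0 < 2 * a)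
    have := sqrt_pos.2 (by nlinarith [hq.1, hq.2] : 0 < 4 - q ^ 2)
    have := hq.1
    positivity
  simp only [← sqrt_eq_rpow]
  exact tendsto_arctan_div_mul_of_tendsto_div hτ
    ((continuous_sqrt.tendsto' 0 0 sqrt_zero).mono_left nhdsWithin_le_nhds) hT

theorem tendsto_arctan_div_sqrt_of_tendsto_div_fa_left {a ν q : ℝ} (ha : 0 < a) (hνa : ν < a)
    (hq : q ∈ Ioo 0 2) {G X : ℝ → ℝ} (hG : ContinuousOn G (Icc (-a) (-ν)))
    (hlim : Tendsto (fun x => G x / fa a x) (𝓝[>] (-a)) (𝓝 q))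
    (hX : ∀ᶠ h in 𝓝[>] 0,
      {x | x ∈ Icc (-a) (-ν) ∧ x ^ 2 + G x ^ 2 = (a - h) ^ 2} = {X h}) :
    Tendsto (fun h => arctan (√((a - h) ^ 2 - X h ^ 2) / |X h|) /
        (q * √(2 * a) / (a * √(4 - q ^ 2)) * h ^ ((1 : ℝ) / 2))) (𝓝[>] 0) (𝓝 1) := by
  have hreflect := tendsto_arctan_div_sqrt_of_tendsto_div_fa ha hνa hq (G := fun x => G (-x))
    (X := fun h => -X h)
    (hG.comp continuousOn_neg fun x hx => neg_mem_Icc_iff.2 (by simpa using hx))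
    (by simpa only [Function.comp_def, fa_neg] using hlim.comp tendsto_neg_nhdsLT) ?_
  · simpa only [neg_sq, abs_neg] using hreflect
  filter_upwards [hX] with h hS
  ext x
  simpa only [mem_ofPred_eq, mem_singleton_iff, neg_mem_Icc_iff, neg_neg, neg_sq,
    neg_eq_iff_eq_neg] using Set.ext_iff.1 hS (-x)

/-- **Lemma 2.** Under assumptions A1–A6, the polar angle `γ_i(h)` of the intersection point
of the boundary function `g_i` with the circle of radius `a - h` satisfies
`γ_i(h) ~ τ_i h^{1/2}` as `h → 0⁺`, where `τ_i = q_i √(2a)/(a √(4 - q_i²))`. -/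
theorem statement7 (A : DomainAssumptions) (i : Fin 4) :
    Tendsto (fun h =>
        Real.arctan (Real.sqrt ((A.a - h) ^ 2 - A.xbar h i ^ 2) / |A.xbar h i|) /
          (A.q i * Real.sqrt (2 * A.a) / (A.a * Real.sqrt (4 - A.q i ^ 2)) *
            h ^ ((1 : ℝ) / 2)))
      (𝓝[>] 0) (𝓝 1) := by
  have hX (j : Fin 4) : ∀ᶠ h in 𝓝[>] 0,
      {x | x ∈ bdom A.a A.ν j ∧ x ^ 2 + A.g j x ^ 2 = (A.a - h) ^ 2} = {A.xbar h j} := by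
    filter_upwards [Ioo_mem_nhdsGT A.hh₀] with h hh using A.a6_unique h hh j
  fin_cases i
  · exact tendsto_arctan_div_sqrt_of_tendsto_div_fa A.ha A.hν.2 (A.hq 0) (A.a4_cont 0) A.a5_0
      (hX 0)
  · exact tendsto_arctan_div_sqrt_of_tendsto_div_fa_left A.ha A.hν.2 (A.hq 1) (A.a4_cont 1)
      A.a5_1 (hX 1)
  · exact tendsto_arctan_div_sqrt_of_tendsto_div_fa_left A.ha A.hν.2 (A.hq 2)
      (G := fun x => -A.g 2 x) (A.a4_cont 2).neg A.a5_2 (by simp only [neg_sq]; exact hX 2)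
  · exact tendsto_arctan_div_sqrt_of_tendsto_div_fa A.ha A.hν.2 (A.hq 3)
      (G := fun x => -A.g 3 x) (A.a4_cont 3).neg A.a5_3 (by simp only [neg_sq]; exact hX 3)

end
end

section
/- Let a > 0 and p ∈ (0,2), and for small h > 0 let x*(h) := √(a² − 4h(2a−h)/(4−p²)) and B_h(x) := √((a−h)²−x²). Set τ(p) := p√(2a)/(a√(4−p²)). Then there exist constants C > 0 and h₀ > 0 such that for all h ∈ (0,h₀), |arctan(B_h(x*(h))/x*(h)) − τ(p)·h^{1/2}| ≤ C h^{3/2}. -/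
open MeasureTheory ProbabilityTheory Set Filter Topology

noncomputable section

/-!
Since `(a - h)² - x*(h)² = p² h (2a - h) / (4 - p²)`, the tangent of the polar angle is
`t(h) = p / √(4 - p²) · √h · g(h)` with `g(h) = √(2a - h) / x*(h)`. The function `g` is
differentiable at `0` with `g(0) = √(2a) / a`, so `t(h) - τ(p) √h = O(√h · h)`; and
`|arctan t - t| ≤ |t|³ / 3` with `t = O(√h)`.
-/

open Real Asymptotics

namespace Real

theorem arctan_le_self {t : ℝ} (ht : 0 ≤ t) : arctan t ≤ t := by
  have hderiv (x : ℝ) : HasDerivAt (fun s => s - arctan s) (1 - 1 / (1 + x ^ 2)) x :=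
    (hasDerivAt_id' x).fun_sub (hasDerivAt_arctan x)
  have hmono : Monotone fun s => s - arctan s :=
    monotone_of_deriv_nonneg (fun x => (hderiv x).differentiableAt) fun x => by
      rw [(hderiv x).deriv, sub_nonneg]
      exact div_le_one_of_le₀ (by nlinarith) (by positivity)
  simpa using hmono ht

theorem sub_cube_div_three_le_arctan {t : ℝ} (ht : 0 ≤ t) : t - t ^ 3 / 3 ≤ arctan t := by
  have hderiv (x : ℝ) :
      HasDerivAt (fun s => arctan s - s + s ^ 3 / 3) (x ^ 4 / (1 + x ^ 2)) x := by
    refine (((hasDerivAt_arctan x).fun_sub (hasDerivAt_id' x)).fun_add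
      ((hasDerivAt_pow 3 x).div_const 3)).congr_deriv ?_
    field_simp
    ring
  have hmono : Monotone fun s => arctan s - s + s ^ 3 / 3 :=
    monotone_of_deriv_nonneg (fun x => (hderiv x).differentiableAt) fun x => by
      rw [(hderiv x).deriv]; positivity
  have := hmono ht
  simp only [arctan_zero] at this
  linarith

theorem abs_arctan_sub_self_le (t : ℝ) : |arctan t - t| ≤ |t| ^ 3 / 3 := by
  rcases le_total 0 t with ht | ht
  · rw [abs_of_nonpos (by linarith [arctan_le_self ht]), abs_of_nonneg ht]
    linarith [sub_cube_div_three_le_arctan ht]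
  · have h₁ := arctan_le_self (neg_nonneg.2 ht)
    have h₂ := sub_cube_div_three_le_arctan (neg_nonneg.2 ht)
    rw [arctan_neg] at h₁ h₂
    rw [abs_of_nonneg (by linarith), abs_of_nonpos ht]
    linarith

end Real

section PolarAngle

variable {a p h : ℝ}

def xStarSq (a p h : ℝ) : ℝ := a ^ 2 - 4 * h * (2 * a - h) / (4 - p ^ 2)

def xStar (a p h : ℝ) : ℝ := √(xStarSq a p h)

def polarAngle (a p h : ℝ) : ℝ := arctan (√((a - h) ^ 2 - xStar a p h ^ 2) / xStar a p h)

theorem xStar_zero (ha : 0 ≤ a) : xStar a p 0 = a := by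
  simp [xStar, xStarSq, sqrt_sq ha]

theorem sq_sub_xStarSq (hp : p ^ 2 ≠ 4) :
    (a - h) ^ 2 - xStarSq a p h = p ^ 2 * h * (2 * a - h) / (4 - p ^ 2) := by
  have : 4 - p ^ 2 ≠ 0 := sub_ne_zero.2 (Ne.symm hp)
  unfold xStarSq
  field_simp
  ring

theorem sqrt_sq_sub_xStar_sq_div_xStar (hp : 0 ≤ p) (hp2 : p < 2) (hh : 0 ≤ h) :
    √((a - h) ^ 2 - xStar a p h ^ 2) / xStar a p h =
      p / √(4 - p ^ 2) * √h * (√(2 * a - h) / xStar a p h) := by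
  rcases lt_or_ge (xStarSq a p h) 0 with hx | hx
  · -- both sides vanish, by `x / 0 = 0`
    simp [xStar, sqrt_eq_zero'.2 hx.le]
  have hq : 0 ≤ 4 - p ^ 2 := by nlinarith
  rw [xStar, sq_sqrt hx, sq_sub_xStarSq (by nlinarith), sqrt_div' _ hq,
    sqrt_mul (by positivity), sqrt_mul (sq_nonneg p), sqrt_sq hp]
  ring

theorem differentiableAt_sqrt_div_xStar (ha : 0 < a) :
    DifferentiableAt ℝ (fun h => √(2 * a - h) / xStar a p h) 0 := by
  have hnum : DifferentiableAt ℝ (fun h : ℝ => √(2 * a - h)) 0 :=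
    (by fun_prop : DifferentiableAt ℝ (fun h : ℝ => 2 * a - h) 0).sqrt (by simp [ha.ne'])
  have hden : DifferentiableAt ℝ (xStar a p) 0 :=
    (by unfold xStarSq; fun_prop : DifferentiableAt ℝ (xStarSq a p) 0).sqrt
      (by simp [xStarSq, ha.ne'])
  exact hnum.div hden (by rw [xStar_zero ha.le]; exact ha.ne')

theorem isBigO_polarAngle_sub (ha : 0 < a) (hp : 0 ≤ p) (hp2 : p < 2) :
    (fun h => polarAngle a p h - p * √(2 * a) / (a * √(4 - p ^ 2)) * h ^ ((1 : ℝ) / 2))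
      =O[𝓝[>] 0] fun h => h ^ ((3 : ℝ) / 2) := by
  set g : ℝ → ℝ := fun h => √(2 * a - h) / xStar a p h
  set c : ℝ := p / √(4 - p ^ 2)
  set s : ℝ → ℝ := fun h => c * √h * g h
  have hg : DifferentiableAt ℝ g 0 := differentiableAt_sqrt_div_xStar ha
  have hg0 : g 0 = √(2 * a) / a := by simp [g, xStar_zero ha.le]
  have hs : s =O[𝓝[>] 0] fun h => √h := by
    simpa using (((isBigO_refl (fun h => √h) _).const_mul_left c).mul
      ((hg.continuousAt.tendsto.isBigO_one ℝ).mono nhdsWithin_le_nhds))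
  have harctan : (fun h => arctan (s h) - s h) =O[𝓝[>] 0] fun h => √h ^ 3 := by
    refine (IsBigO.of_bound (1 / 3) (Eventually.of_forall fun h => ?_)).trans (hs.pow 3)
    simpa [norm_pow, div_eq_inv_mul] using abs_arctan_sub_self_le (s h)
  have hlin : (fun h => c * (√h * (g h - g 0))) =O[𝓝[>] 0] fun h => √h * h := by
    refine ((isBigO_refl (fun h => √h) _).mul ?_).const_mul_left c
    simpa only [sub_zero] using hg.isBigO_sub.mono nhdsWithin_le_nhds
  have hcube : ∀ᶠ h in 𝓝[>] (0 : ℝ), √h * h = √h ^ 3 := by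
    filter_upwards [self_mem_nhdsWithin] with h hh
    rw [pow_succ, sq_sqrt (le_of_lt hh), mul_comm]
  have hrpow : ∀ᶠ h in 𝓝[>] (0 : ℝ), √h ^ 3 = h ^ ((3 : ℝ) / 2) := by
    filter_upwards [self_mem_nhdsWithin] with h hh
    rw [sqrt_eq_rpow, ← rpow_natCast, ← rpow_mul (le_of_lt hh)]
    norm_num
  have hsplit : ∀ᶠ h in 𝓝[>] (0 : ℝ), arctan (s h) - s h + c * (√h * (g h - g 0)) =
      polarAngle a p h - p * √(2 * a) / (a * √(4 - p ^ 2)) * h ^ ((1 : ℝ) / 2) := by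
    filter_upwards [self_mem_nhdsWithin] with h hh
    rw [polarAngle, sqrt_sq_sub_xStar_sq_div_xStar hp hp2 (le_of_lt hh), ← sqrt_eq_rpow, hg0]
    ring
  exact (harctan.add (hlin.congr' .rfl hcube)).congr' hsplit hrpow

end PolarAngle

/-- The polar angle of the intersection point of the scaled ellipse boundary with the circle
of radius `a - h` is `τ(p) h^{1/2} + O(h^{3/2})` as `h → 0⁺`. -/
theorem statement8 (a p : ℝ) (ha : 0 < a) (hp : p ∈ Set.Ioo (0 : ℝ) 2) :
    ∃ C > (0 : ℝ), ∃ h₀ > (0 : ℝ), ∀ h ∈ Set.Ioo 0 h₀,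
      |Real.arctan (Real.sqrt ((a - h) ^ 2 -
            Real.sqrt (a ^ 2 - 4 * h * (2 * a - h) / (4 - p ^ 2)) ^ 2) /
          Real.sqrt (a ^ 2 - 4 * h * (2 * a - h) / (4 - p ^ 2))) -
        p * Real.sqrt (2 * a) / (a * Real.sqrt (4 - p ^ 2)) * h ^ ((1 : ℝ) / 2)| ≤
      C * h ^ ((3 : ℝ) / 2) := by
  obtain ⟨C, hC, hbound⟩ := (isBigO_polarAngle_sub ha hp.1.le hp.2).exists_pos
  obtain ⟨h₀, hh₀, hsub⟩ := mem_nhdsGT_iff_exists_Ioo_subset.1 hbound.bound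
  refine ⟨C, hC, h₀, hh₀, fun h hh => ?_⟩
  have := hsub hh
  rwa [mem_ofPred_eq, norm_eq_abs, norm_eq_abs, abs_of_pos (rpow_pos_of_pos hh.1 _)] at this
end
end

section
/- Let a > 0, and let (r_{1,n}, w_{1,n})_{n≥1} and (r_{3,n}, w_{3,n})_{n≥1} be sequences in [0,a] × [0,∞) with r_{1,n} → a, r_{3,n} → a, w_{1,n} → 0, w_{3,n} → 0. Write p(r,φ) := r(cos φ, sin φ) and e_n := w_{1,n} − w_{3,n}. Then the remainder R_n defined by |p(r_{1,n}, w_{1,n}) − p(r_{3,n}, π + w_{3,n})| = r_{1,n} + r_{3,n} − (a/4)e_n² + R_n satisfies R_n = O(e_n⁴ + e_n²(a − r_{1,n}) + e_n²(a − r_{3,n}) + (a − r_{1,n})² + (a − r_{3,n})²) as n → ∞; i.e., there is a constant C such that |R_n| ≤ C(e_n⁴ + e_n²(a − r_{1,n}) + e_n²(a − r_{3,n}) + (a − r_{1,n})² + (a − r_{3,n})²) for all sufficiently large n. -/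
open MeasureTheory ProbabilityTheory Set Filter Topology

noncomputable section

/-! Write `S = r₁ + r₃`, `e = w₁ - w₃` and `q = 2 r₁ r₃ (1 - cos e)`. The law of cosines gives
`d² = S² - q` for the distance `d`, hence `d = S - q / (2S) + O(q² / S³)`, and `q = O(e²)`.
Next, `q / (2S) = (r₁ r₃ / S) (e² / 2 + O(e⁴))`, and the half harmonic mean `r₁ r₃ / S` differs
from `a / 2` by at most `((a - r₁) + (a - r₃)) / 2`; together this is `(a/4) e²` up to the
stated error. -/

open Real

lemma dist_pt_sq (x₁ y₁ x₂ y₂ : ℝ) :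
    dist (pt x₁ y₁) (pt x₂ y₂) ^ 2 = (x₁ - x₂) ^ 2 + (y₁ - y₂) ^ 2 := by
  rw [EuclideanSpace.dist_eq, sq_sqrt (by positivity)]
  simp [pt, Fin.sum_univ_two, Real.dist_eq, sq_abs]

lemma dist_pt_polar_sq (r φ s ψ : ℝ) :
    dist (pt (r * cos φ) (r * sin φ)) (pt (s * cos ψ) (s * sin ψ)) ^ 2 =
      r ^ 2 + s ^ 2 - 2 * r * s * cos (φ - ψ) := by
  rw [dist_pt_sq, cos_sub]
  linear_combination r ^ 2 * sin_sq_add_cos_sq φ + s ^ 2 * sin_sq_add_cos_sq ψ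

lemma abs_sub_sub_div_le_of_sq_eq {S d q : ℝ} (hS : 0 < S) (hd : 0 ≤ d)
    (hdq : d ^ 2 = S ^ 2 - q) : |d - (S - q / (2 * S))| ≤ q ^ 2 / (2 * S ^ 3) := by
  have hSd : 0 < S + d := by linarith
  have hexp : d - (S - q / (2 * S)) = -(q ^ 2 / (2 * S * (S + d) ^ 2)) := by
    have hq : q = (S - d) * (S + d) := by linear_combination hdq
    field_simp
    rw [hq]; ring
  rw [hexp, abs_neg, abs_of_nonneg (by positivity)]
  refine div_le_div_of_nonneg_left (sq_nonneg q) (by positivity) ?_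
  calc 2 * S ^ 3 = 2 * S * S ^ 2 := by ring
    _ ≤ 2 * S * (S + d) ^ 2 := by gcongr; linarith

lemma abs_law_of_cosines_remainder_le {a r s e d : ℝ} (ha : 0 < a) (hr : r ∈ Icc (a / 2) a)
    (hs : s ∈ Icc (a / 2) a) (he : |e| ≤ 1) (hd : 0 ≤ d)
    (hdsq : d ^ 2 = r ^ 2 + s ^ 2 + 2 * r * s * cos e) :
    |d - (r + s - a / 4 * e ^ 2)| ≤ a * e ^ 4 + e ^ 2 / 2 * ((a - r) + (a - s)) := by
  obtain ⟨hr₀, hra⟩ := hr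
  obtain ⟨hs₀, hsa⟩ := hs
  set S := r + s
  set q := 2 * r * s * (1 - cos e)
  have hS : a ≤ S := by linarith
  have hS₀ : 0 < S := by linarith
  have hrs : 0 ≤ r * s := by nlinarith
  have hrsS : r * s / S ≤ a / 2 := by
    rw [div_le_iff₀ hS₀]; nlinarith
  have hsplit : d - (S - a / 4 * e ^ 2) = (d - (S - q / (2 * S)))
      + r * s / S * (cos e - (1 - e ^ 2 / 2)) + e ^ 2 / 2 * (a / 2 - r * s / S) := by
    field_simp; ring
  have hq₀ : 0 ≤ q := mul_nonneg (by linarith) (by linarith [cos_le_one e])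
  have hq : q ≤ a ^ 2 * e ^ 2 := by
    have := one_sub_sq_div_two_le_cos (x := e)
    have : r * s ≤ a ^ 2 := by nlinarith
    nlinarith
  have hsqrt : |d - (S - q / (2 * S))| ≤ a * e ^ 4 / 2 := by
    calc |d - (S - q / (2 * S))| ≤ q ^ 2 / (2 * S ^ 3) :=
          abs_sub_sub_div_le_of_sq_eq hS₀ hd (by linear_combination hdsq)
      _ ≤ (a ^ 2 * e ^ 2) ^ 2 / (2 * a ^ 3) := by gcongr
      _ = a * e ^ 4 / 2 := by field_simp
  have hcos : |r * s / S * (cos e - (1 - e ^ 2 / 2))| ≤ a * e ^ 4 / 2 := by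
    have := cos_bound he
    rw [pow_abs, abs_of_nonneg (by positivity : (0:ℝ) ≤ e ^ 4)] at this
    rw [abs_mul, abs_of_nonneg (by positivity)]
    calc r * s / S * |cos e - (1 - e ^ 2 / 2)| ≤ a / 2 * (e ^ 4 * (5 / 96)) := by gcongr
      _ ≤ a * e ^ 4 / 2 := by nlinarith [pow_nonneg (sq_nonneg e) 2]
  have hmean : |e ^ 2 / 2 * (a / 2 - r * s / S)| ≤ e ^ 2 / 2 * ((a - r) + (a - s)) := by
    have hrsS' : (S - a) / 2 ≤ r * s / S := by
      rw [le_div_iff₀ hS₀]; nlinarith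
    rw [abs_mul, abs_of_nonneg (by positivity), abs_of_nonneg (by linarith)]
    gcongr
    linarith
  rw [hsplit]
  calc _ ≤ |d - (S - q / (2 * S))| + |r * s / S * (cos e - (1 - e ^ 2 / 2))|
        + |e ^ 2 / 2 * (a / 2 - r * s / S)| := abs_add_three _ _ _
    _ ≤ _ := by linarith

theorem statement10_general (a : ℝ) (ha : 0 < a) (r₁ w₁ r₃ w₃ : ℕ → ℝ)
    (hr₁m : ∀ n, r₁ n ∈ Set.Icc 0 a) (hr₃m : ∀ n, r₃ n ∈ Set.Icc 0 a)
    (hr₁ : Tendsto r₁ atTop (𝓝 a)) (hr₃ : Tendsto r₃ atTop (𝓝 a))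
    (hw₁ : Tendsto w₁ atTop (𝓝 0)) (hw₃ : Tendsto w₃ atTop (𝓝 0)) :
    ∃ C : ℝ, ∃ n₀ : ℕ, ∀ n ≥ n₀,
      |dist (pt (r₁ n * Real.cos (w₁ n)) (r₁ n * Real.sin (w₁ n)))
          (pt (r₃ n * Real.cos (Real.pi + w₃ n)) (r₃ n * Real.sin (Real.pi + w₃ n))) -
        (r₁ n + r₃ n - a / 4 * (w₁ n - w₃ n) ^ 2)| ≤
      C * ((w₁ n - w₃ n) ^ 4 + (w₁ n - w₃ n) ^ 2 * (a - r₁ n) +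
        (w₁ n - w₃ n) ^ 2 * (a - r₃ n) + (a - r₁ n) ^ 2 + (a - r₃ n) ^ 2) := by
  refine ⟨a + 1, eventually_atTop.mp ?_⟩
  have he : ∀ᶠ n in atTop, |w₁ n - w₃ n| ≤ 1 := by
    have hw := (hw₁.sub hw₃).abs
    rw [sub_zero, abs_zero] at hw
    exact hw.eventually (eventually_le_nhds one_pos)
  filter_upwards [hr₁.eventually (eventually_ge_nhds (half_lt_self ha)),
    hr₃.eventually (eventually_ge_nhds (half_lt_self ha)), he] with n h₁ h₃ he
  have hd := dist_pt_polar_sq (r₁ n) (w₁ n) (r₃ n) (π + w₃ n)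
  rw [show w₁ n - (π + w₃ n) = (w₁ n - w₃ n) - π by ring, cos_sub_pi] at hd
  have hu : 0 ≤ a - r₁ n := sub_nonneg.2 (hr₁m n).2
  have hv : 0 ≤ a - r₃ n := sub_nonneg.2 (hr₃m n).2
  calc _ ≤ a * (w₁ n - w₃ n) ^ 4 + (w₁ n - w₃ n) ^ 2 / 2 * ((a - r₁ n) + (a - r₃ n)) :=
        abs_law_of_cosines_remainder_le ha ⟨h₁, (hr₁m n).2⟩ ⟨h₃, (hr₃m n).2⟩ he dist_nonneg
          (by linear_combination hd)
    _ ≤ _ := by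
        have := sq_nonneg (w₁ n - w₃ n)
        nlinarith [mul_nonneg this hu, mul_nonneg this hv, sq_nonneg (a - r₁ n),
          sq_nonneg (a - r₃ n), pow_nonneg this 2]

/-- **Lemma 3 (opposite quadrants).** For points `p(r_{1,n}, w_{1,n})` near the pole `(a,0)`
and `p(r_{3,n}, π + w_{3,n})` near the pole `(-a,0)`, with `e_n = w_{1,n} - w_{3,n}`,
the distance equals `r_{1,n} + r_{3,n} - (a/4) e_n² + R_n` with
`R_n = O(e_n⁴ + e_n²(a-r_{1,n}) + e_n²(a-r_{3,n}) + (a-r_{1,n})² + (a-r_{3,n})²)`. -/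
theorem statement10 (a : ℝ) (ha : 0 < a) (r₁ w₁ r₃ w₃ : ℕ → ℝ)
    (hr₁m : ∀ n, r₁ n ∈ Set.Icc 0 a) (hr₃m : ∀ n, r₃ n ∈ Set.Icc 0 a)
    (hw₁m : ∀ n, 0 ≤ w₁ n) (hw₃m : ∀ n, 0 ≤ w₃ n)
    (hr₁ : Tendsto r₁ atTop (𝓝 a)) (hr₃ : Tendsto r₃ atTop (𝓝 a))
    (hw₁ : Tendsto w₁ atTop (𝓝 0)) (hw₃ : Tendsto w₃ atTop (𝓝 0)) :
    ∃ C : ℝ, ∃ n₀ : ℕ, ∀ n ≥ n₀,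
      |dist (pt (r₁ n * Real.cos (w₁ n)) (r₁ n * Real.sin (w₁ n)))
          (pt (r₃ n * Real.cos (Real.pi + w₃ n)) (r₃ n * Real.sin (Real.pi + w₃ n))) -
        (r₁ n + r₃ n - a / 4 * (w₁ n - w₃ n) ^ 2)| ≤
      C * ((w₁ n - w₃ n) ^ 4 + (w₁ n - w₃ n) ^ 2 * (a - r₁ n) +
        (w₁ n - w₃ n) ^ 2 * (a - r₃ n) + (a - r₁ n) ^ 2 + (a - r₃ n) ^ 2) :=
  statement10_general a ha r₁ w₁ r₃ w₃ hr₁m hr₃m hr₁ hr₃ hw₁ hw₃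

end
end

section
/- Let a > 0, and let (r_{1,n}, w_{1,n})_{n≥1} and (r_{2,n}, w_{2,n})_{n≥1} be sequences in [0,a] × [0,∞) with r_{1,n} → a, r_{2,n} → a, w_{1,n} → 0, w_{2,n} → 0. Write p(r,φ) := r(cos φ, sin φ) and f_n := w_{1,n} + w_{2,n}. Then the remainder R_n defined by |p(r_{1,n}, w_{1,n}) − p(r_{2,n}, π − w_{2,n})| = r_{1,n} + r_{2,n} − (a/4)f_n² + R_n satisfies R_n = O(f_n⁴ + f_n²(a − r_{1,n}) + f_n²(a − r_{2,n}) + (a − r_{1,n})² + (a − r_{2,n})²) as n → ∞. -/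
/-!
By the law of cosines the squared distance is `E = r₁² + r₂² + 2 r₁ r₂ cos f`. Writing
`t = r₁ + r₂ - (a/4) f²` and `dᵢ = a - rᵢ`, the leading terms of `E - t²` cancel, leaving
`O(f⁴ + f² d₁ + f² d₂)`. Since `t` stays near `2a`, the identity `√E - t = (E - t²)/(√E + t)`
transfers this bound to the distance itself.
-/

open MeasureTheory ProbabilityTheory Set Filter Topology

noncomputable section

open Real

theorem dist_pt_polar_pi_sub (r₁ w₁ r₂ w₂ : ℝ) :
    dist (pt (r₁ * cos w₁) (r₁ * sin w₁)) (pt (r₂ * cos (π - w₂)) (r₂ * sin (π - w₂))) =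
      √(r₁ ^ 2 + r₂ ^ 2 + 2 * r₁ * r₂ * cos (w₁ + w₂)) := by
  rw [EuclideanSpace.dist_eq, Fin.sum_univ_two]
  simp only [pt, PiLp.toLp_apply, Matrix.cons_val_zero, Matrix.cons_val_one, Real.dist_eq, sq_abs,
    cos_pi_sub, sin_pi_sub, cos_add]
  congr 1
  linear_combination r₁ ^ 2 * sin_sq_add_cos_sq w₁ + r₂ ^ 2 * sin_sq_add_cos_sq w₂

theorem abs_sqrt_sub_mul_le (x : ℝ) {t : ℝ} (ht : 0 ≤ t) : |√x - t| * t ≤ |x - t ^ 2| := by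
  rcases le_or_gt 0 x with hx | hx
  · calc |√x - t| * t ≤ |√x - t| * (√x + t) := by gcongr; exact le_add_of_nonneg_left (sqrt_nonneg x)
      _ = |x - t ^ 2| := by
        rw [← abs_of_nonneg (by positivity : 0 ≤ √x + t), ← abs_mul]
        congr 1
        linear_combination sq_sqrt hx
  · rw [sqrt_eq_zero_of_nonpos hx.le, zero_sub, abs_neg, abs_of_nonneg ht, abs_of_neg (by nlinarith)]
    nlinarith

/-- The key cancellation: with `dᵢ = a - rᵢ`, the difference equals
`f² ((a/2)(d₁ + d₂) - d₁ d₂) + 2 r₁ r₂ (cos f - 1 + f²/2) - a² f⁴/16`. -/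
theorem abs_sq_dist_sub_sq_le {a r₁ r₂ f : ℝ} (h₁ : r₁ ∈ Icc 0 a) (h₂ : r₂ ∈ Icc 0 a)
    (hf : |f| ≤ 1) :
    |r₁ ^ 2 + r₂ ^ 2 + 2 * r₁ * r₂ * cos f - (r₁ + r₂ - a / 4 * f ^ 2) ^ 2| ≤
      3 * a / 2 * (f ^ 2 * (a - r₁) + f ^ 2 * (a - r₂)) + 3 * a ^ 2 * f ^ 4 := by
  obtain ⟨h₁0, h₁a⟩ := h₁
  obtain ⟨h₂0, h₂a⟩ := h₂
  set g := cos f - (1 - f ^ 2 / 2)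
  have hg : |g| ≤ f ^ 4 := by
    have h := cos_bound hf
    rw [pow_abs, abs_of_nonneg (by positivity : 0 ≤ f ^ 4)] at h
    linarith [pow_nonneg (sq_nonneg f) 2]
  have hid : r₁ ^ 2 + r₂ ^ 2 + 2 * r₁ * r₂ * cos f - (r₁ + r₂ - a / 4 * f ^ 2) ^ 2 =
      f ^ 2 * (a / 2 * ((a - r₁) + (a - r₂)) - (a - r₁) * (a - r₂)) + 2 * (r₁ * r₂) * g -
        a ^ 2 * f ^ 4 / 16 := by
    simp only [g]; ring
  have hbracket : |a / 2 * ((a - r₁) + (a - r₂)) - (a - r₁) * (a - r₂)| ≤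
      3 * a / 2 * ((a - r₁) + (a - r₂)) := by
    rw [abs_le]; constructor <;> nlinarith
  have hr : |r₁ * r₂| ≤ a ^ 2 := by
    rw [abs_of_nonneg (by positivity)]; nlinarith
  rw [hid]
  calc _ ≤ |f ^ 2 * (a / 2 * ((a - r₁) + (a - r₂)) - (a - r₁) * (a - r₂))| +
        |2 * (r₁ * r₂) * g| + |a ^ 2 * f ^ 4 / 16| :=
          (abs_sub _ _).trans (by gcongr; exact abs_add_le _ _)
    _ ≤ f ^ 2 * (3 * a / 2 * ((a - r₁) + (a - r₂))) + 2 * a ^ 2 * f ^ 4 + a ^ 2 * f ^ 4 / 16 := by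
      rw [abs_mul, abs_mul, abs_mul, abs_two, abs_sq]
      gcongr
      exact (abs_of_nonneg (by positivity)).le
    _ ≤ _ := by nlinarith [pow_nonneg (sq_nonneg f) 2, sq_nonneg a]

theorem abs_dist_pt_polar_pi_sub_sub_le {a r₁ w₁ r₂ w₂ : ℝ} (ha : 0 < a)
    (h₁ : r₁ ∈ Icc (a / 2) a) (h₂ : r₂ ∈ Icc (a / 2) a) (hf : |w₁ + w₂| ≤ 1) :
    |dist (pt (r₁ * cos w₁) (r₁ * sin w₁)) (pt (r₂ * cos (π - w₂)) (r₂ * sin (π - w₂))) -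
        (r₁ + r₂ - a / 4 * (w₁ + w₂) ^ 2)| ≤
      (4 * a + 2) * ((w₁ + w₂) ^ 4 + (w₁ + w₂) ^ 2 * (a - r₁) +
        (w₁ + w₂) ^ 2 * (a - r₂) + (a - r₁) ^ 2 + (a - r₂) ^ 2) := by
  set f := w₁ + w₂
  set t := r₁ + r₂ - a / 4 * f ^ 2
  have ht : 3 * a / 4 ≤ t := by
    have : f ^ 2 ≤ 1 := by rw [← sq_abs]; exact pow_le_one₀ (abs_nonneg f) hf
    show 3 * a / 4 ≤ r₁ + r₂ - a / 4 * f ^ 2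
    nlinarith [h₁.1, h₂.1]
  have hsq := abs_sq_dist_sub_sq_le (Icc_subset_Icc_left (half_pos ha).le h₁)
    (Icc_subset_Icc_left (half_pos ha).le h₂) hf
  have hmul := abs_sqrt_sub_mul_le (r₁ ^ 2 + r₂ ^ 2 + 2 * r₁ * r₂ * cos f) (by linarith : 0 ≤ t)
  rw [dist_pt_polar_pi_sub]
  have hd₁ : 0 ≤ a - r₁ := by linarith [h₁.2]
  have hd₂ : 0 ≤ a - r₂ := by linarith [h₂.2]
  refine le_of_mul_le_mul_right ?_ (by positivity : 0 < 3 * a / 4)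
  calc _ ≤ _ * t := by gcongr
    _ ≤ _ := hmul.trans hsq
    _ ≤ _ := by
      have : 0 ≤ f ^ 2 * (a - r₁) := by positivity
      have : 0 ≤ f ^ 2 * (a - r₂) := by positivity
      nlinarith [pow_nonneg (sq_nonneg f) 2, sq_nonneg (a - r₁), sq_nonneg (a - r₂)]

theorem statement11_general (a : ℝ) (ha : 0 < a) (r₁ w₁ r₂ w₂ : ℕ → ℝ)
    (hr₁m : ∀ n, r₁ n ∈ Set.Icc 0 a) (hr₂m : ∀ n, r₂ n ∈ Set.Icc 0 a)
    (hr₁ : Tendsto r₁ atTop (𝓝 a)) (hr₂ : Tendsto r₂ atTop (𝓝 a))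
    (hw₁ : Tendsto w₁ atTop (𝓝 0)) (hw₂ : Tendsto w₂ atTop (𝓝 0)) :
    ∃ C : ℝ, ∃ n₀ : ℕ, ∀ n ≥ n₀,
      |dist (pt (r₁ n * Real.cos (w₁ n)) (r₁ n * Real.sin (w₁ n)))
          (pt (r₂ n * Real.cos (Real.pi - w₂ n)) (r₂ n * Real.sin (Real.pi - w₂ n))) -
        (r₁ n + r₂ n - a / 4 * (w₁ n + w₂ n) ^ 2)| ≤
      C * ((w₁ n + w₂ n) ^ 4 + (w₁ n + w₂ n) ^ 2 * (a - r₁ n) +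
        (w₁ n + w₂ n) ^ 2 * (a - r₂ n) + (a - r₁ n) ^ 2 + (a - r₂ n) ^ 2) := by
  have hr₁' := hr₁.eventually (eventually_ge_nhds (half_lt_self ha))
  have hr₂' := hr₂.eventually (eventually_ge_nhds (half_lt_self ha))
  have hf : ∀ᶠ n in atTop, |w₁ n + w₂ n| ≤ 1 := by
    have := (hw₁.add hw₂).eventually (Metric.closedBall_mem_nhds (0 + 0 : ℝ) one_pos)
    simpa [Real.dist_eq] using this
  obtain ⟨n₀, hn₀⟩ := eventually_atTop.1 ((hr₁'.and hr₂').and hf)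
  refine ⟨4 * a + 2, n₀, fun n hn => ?_⟩
  obtain ⟨⟨h₁, h₂⟩, hfn⟩ := hn₀ n hn
  exact abs_dist_pt_polar_pi_sub_sub_le ha ⟨h₁, (hr₁m n).2⟩ ⟨h₂, (hr₂m n).2⟩ hfn

/-- **Lemma 4 (adjacent quadrants).** For points `p(r_{1,n}, w_{1,n})` near the pole `(a,0)`
and `p(r_{2,n}, π - w_{2,n})` near the pole `(-a,0)`, with `f_n = w_{1,n} + w_{2,n}`,
the distance equals `r_{1,n} + r_{2,n} - (a/4) f_n² + R_n` with
`R_n = O(f_n⁴ + f_n²(a-r_{1,n}) + f_n²(a-r_{2,n}) + (a-r_{1,n})² + (a-r_{2,n})²)`. -/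
theorem statement11 (a : ℝ) (ha : 0 < a) (r₁ w₁ r₂ w₂ : ℕ → ℝ)
    (hr₁m : ∀ n, r₁ n ∈ Set.Icc 0 a) (hr₂m : ∀ n, r₂ n ∈ Set.Icc 0 a)
    (hw₁m : ∀ n, 0 ≤ w₁ n) (hw₂m : ∀ n, 0 ≤ w₂ n)
    (hr₁ : Tendsto r₁ atTop (𝓝 a)) (hr₂ : Tendsto r₂ atTop (𝓝 a))
    (hw₁ : Tendsto w₁ atTop (𝓝 0)) (hw₂ : Tendsto w₂ atTop (𝓝 0)) :
    ∃ C : ℝ, ∃ n₀ : ℕ, ∀ n ≥ n₀,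
      |dist (pt (r₁ n * Real.cos (w₁ n)) (r₁ n * Real.sin (w₁ n)))
          (pt (r₂ n * Real.cos (Real.pi - w₂ n)) (r₂ n * Real.sin (Real.pi - w₂ n))) -
        (r₁ n + r₂ n - a / 4 * (w₁ n + w₂ n) ^ 2)| ≤
      C * ((w₁ n + w₂ n) ^ 4 + (w₁ n + w₂ n) ^ 2 * (a - r₁ n) +
        (w₁ n + w₂ n) ^ 2 * (a - r₂ n) + (a - r₁ n) ^ 2 + (a - r₂ n) ^ 2) :=
  statement11_general a ha r₁ w₁ r₂ w₂ hr₁m hr₂m hr₁ hr₂ hw₁ hw₂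
end
end
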